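/- arXiv:1710.00877 — 4 statements merged into one kernel-verified Lean document; each statement's English description precedes it below -/
import Mathlib

section
/- Let T_{W,κ} be a κ-branching bundle graph and fix vertices u = (r,A) and v = (s,B). If (t_i, C_i)_{i=0}^n is a path in T_{W,κ} starting at u and ending at v, then there exists i ∈ {0,…,n} such that C_i ⪯ A∧B. -/
/-! Only one property of `T_{W,κ}` matters: adjacent vertices have `⪯`-comparable labels.
Since `C ⪯ A ∧ B` iff `C ⪯ A` and `C ⪯ B`, induct on the walk `u = (r,A), x = (t,X), …, v`.
The walk from `x` contains a vertex `c = (t',C)` with `C ⪯ X` and `C ⪯ B`. If `X ⪯ A`, then `c`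
also works for the walk from `u`. If `A ⪯ X`, then `A` and `C` are both prefixes of `X`, hence
comparable, and whichever of `u`, `c` has the shorter label works. -/

/-- The longest common initial segment (longest common prefix) of two finite sequences. -/
def commonPrefix {κ : Type*} [DecidableEq κ] : List κ → List κ → List κ
  | a :: as, b :: bs => if a = b then a :: commonPrefix as bs else []
  | _, _ => []

/-- Vertices of the κ-branching bundle graph `T_{W,κ}`: pairs `(r, A)` with
`r ∈ {0,…,M+1}` and `A` a sequence in `κ` of length `w r`. -/
def BundleVertex (M : ℕ) (w : ℕ → ℕ) (κ : Type*) : Type _ :=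
  {p : ℕ × List κ // p.1 ≤ M + 1 ∧ p.2.length = w p.1}

/-- The κ-branching bundle graph `T_{W,κ}` associated with the sequence
`W = (w_r)_{r=0}^{M+1}`: `(r,A)` and `(s,B)` are adjacent iff `|r - s| = 1` and one of
`A`, `B` is an initial segment of the other. -/
def bundleGraph (M : ℕ) (w : ℕ → ℕ) (κ : Type*) : SimpleGraph (BundleVertex M w κ) where
  Adj u v := (u.val.1 + 1 = v.val.1 ∨ v.val.1 + 1 = u.val.1) ∧
      (u.val.2 <+: v.val.2 ∨ v.val.2 <+: u.val.2)
  symm := by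
    constructor
    intro u v h
    exact ⟨h.1.symm, h.2.symm⟩
  loopless := by
    constructor
    intro u h
    rcases h.1 with h1 | h1 <;> omega

theorem prefix_commonPrefix_iff {κ : Type*} [DecidableEq κ] {x : List κ} :
    ∀ {a b : List κ}, x <+: commonPrefix a b ↔ x <+: a ∧ x <+: b := by
  induction x with
  | nil => simp
  | cons c xs ih =>
    intro a b
    cases a with
    | nil => simp [commonPrefix]
    | cons a as =>
      cases b with
      | nil => simp [commonPrefix]
      | cons b bs =>
        by_cases hab : a = b
        · subst hab
          simp only [commonPrefix, if_true, List.cons_prefix_cons, ih]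
          tauto
        · simp only [commonPrefix, hab, if_false, List.cons_prefix_cons, List.prefix_nil,
            reduceCtorEq, false_iff]
          rintro ⟨⟨rfl, -⟩, rfl, -⟩
          exact hab rfl

theorem SimpleGraph.Walk.exists_mem_support_prefix_of_adj_comparable {V α : Type*}
    {G : SimpleGraph V} (f : V → List α)
    (hf : ∀ ⦃x y⦄, G.Adj x y → f x <+: f y ∨ f y <+: f x) {u v : V} (p : G.Walk u v) :
    ∃ c ∈ p.support, f c <+: f u ∧ f c <+: f v := by
  induction p with
  | nil => exact ⟨_, List.mem_singleton_self _, List.prefix_refl _, List.prefix_refl _⟩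
  | @cons u x v hadj q ih =>
    obtain ⟨c, hc, hcx, hcv⟩ := ih
    have hc' : c ∈ (cons hadj q).support := List.mem_cons_of_mem _ hc
    rcases hf hadj with hux | hxu
    · rcases List.prefix_or_prefix_of_prefix hcx hux with hcu | huc
      · exact ⟨c, hc', hcu, hcv⟩
      · exact ⟨u, List.mem_cons_self, List.prefix_refl _, huc.trans hcv⟩
    · exact ⟨c, hc', hcx.trans hxu, hcv⟩

theorem bundleGraph_walk_exists_prefix_commonPrefix_general
    (M : ℕ) (w : ℕ → ℕ)
    (κ : Type*) [DecidableEq κ]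
    (u v : BundleVertex M w κ) (p : (bundleGraph M w κ).Walk u v) :
    ∃ c ∈ p.support, c.val.2 <+: commonPrefix u.val.2 v.val.2 := by
  obtain ⟨c, hc, hcu, hcv⟩ :=
    p.exists_mem_support_prefix_of_adj_comparable (fun c => c.val.2)
      fun _ _ (h : (bundleGraph M w κ).Adj _ _) => h.2
  exact ⟨c, hc, prefix_commonPrefix_iff.2 ⟨hcu, hcv⟩⟩

/-- **Lemma `path`.** If `(t_i, C_i)_{i=0}^n` is a path in `T_{W,κ}` from
`u = (r,A)` to `v = (s,B)`, then some vertex `(t_i, C_i)` on the path satisfies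
`C_i ⪯ A ∧ B`. -/
theorem bundleGraph_walk_exists_prefix_commonPrefix
    (M : ℕ) (w : ℕ → ℕ) (hw0 : w 0 = 0) (hwM : w (M + 1) = 0)
    (κ : Type*) [DecidableEq κ]
    (u v : BundleVertex M w κ) (p : (bundleGraph M w κ).Walk u v) :
    ∃ c ∈ p.support, c.val.2 <+: commonPrefix u.val.2 v.val.2 :=
  bundleGraph_walk_exists_prefix_commonPrefix_general M w κ u v p
end

section
/- Fix sequences W = (w_r)_{r=0}^{M+1} and W' = (w'_r)_{r=0}^{M'+1} of nonnegative integers with w_0 = w_{M+1} = w'_0 = w'_{M'+1} = 0, and let W'' be the sequence of length (M+1)(M'+1)+1 with w''_0 = 0 and, for n ∈ {0,…,M}: w''_r = max{w_n, w_{n+1}} + w'_{r−n(M'+1)} for n(M'+1) < r < (n+1)(M'+1) and w''_r = w_{n+1} for r = (n+1)(M'+1). For each n ∈ {0,…,M} let K_n = max{w_n, w_{n+1}}. Then for all n ∈ {0,…,M}, all r with n(M'+1) < r ≤ (n+1)(M'+1), and all i ∈ ℕ₀: x''(r,i) = (M'+1)·x(n+1,i) if r = (n+1)(M'+1); x''(r,i)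 = (M'+1)·x(n,i) if r ≠ (n+1)(M'+1) and i ≤ K_n; and x''(r,i) = n(M'+1) + x'(r − n(M'+1), i − K_n) otherwise. Likewise y''(r,i) = (M'+1)·y(n+1,i) if r = (n+1)(M'+1) or i ≤ K_n, and y''(r,i) = n(M'+1) + y'(r − n(M'+1), i − K_n) otherwise. -/
def xfun (w : ℕ → ℕ) (r i : ℕ) : ℕ := Nat.findGreatest (fun t => w t < i) r

noncomputable def yfun (T : ℕ) (w : ℕ → ℕ) (r i : ℕ) : ℕ :=
  if i = 0 then T else sInf {t : ℕ | r ≤ t ∧ t ≤ T ∧ w t < i}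

/-!
Write `N = M' + 1` and `K_n = max{w_n, w_{n+1}}`. On the block `[nN, (n+1)N]` the sequence
`W''` is `W'` lifted by `K_n`, except at the endpoints, which carry `w_n, w_{n+1} ≤ K_n`. So for
`i ≤ K_n` the interior of the block never drops below level `i`, and `x''`, `y''` jump to the
endpoints. On multiples of `N` they are `N` times `x`, `y`, because `W''` agrees with `W` there
and an interior point below level `i` forces both endpoints of its block below `i`. For `i > K_n`
the endpoints lie below level `i` exactly as `w'_0 = w'_N = 0 < i - K_n` do, so on the block
`x''`, `y''` are `x'`, `y'` at level `i - K_n`, shifted by `nN`.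
-/
section Characterization

variable {w : ℕ → ℕ} {T r i m : ℕ}

theorem xfun_zero (w : ℕ → ℕ) (r : ℕ) : xfun w r 0 = 0 :=
  Nat.findGreatest_eq_zero_iff.mpr fun _ _ _ h => Nat.not_lt_zero _ h

theorem isGreatest_xfun (h0 : w 0 < i) : IsGreatest {t | t ≤ r ∧ w t < i} (xfun w r i) :=
  ⟨⟨Nat.findGreatest_le r, Nat.findGreatest_spec (P := fun t => w t < i) r.zero_le h0⟩,
    fun _ ht => Nat.le_findGreatest ht.1 ht.2⟩

theorem xfun_eq_of_isGreatest (h : IsGreatest {t | t ≤ r ∧ w t < i} m) : xfun w r i = m :=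
  Nat.findGreatest_eq_iff.mpr
    ⟨h.1.1, fun _ => h.1.2, fun _ hmt htr ht => (h.2 ⟨htr, ht⟩).not_gt hmt⟩

theorem isLeast_yfun (hi : i ≠ 0) (hr : r ≤ T) (hT : w T < i) :
    IsLeast {t | r ≤ t ∧ t ≤ T ∧ w t < i} (yfun T w r i) := by
  simpa only [yfun, if_neg hi] using
    isLeast_csInf (s := {t | r ≤ t ∧ t ≤ T ∧ w t < i}) ⟨T, hr, le_rfl, hT⟩

theorem yfun_eq_of_isLeast (hi : i ≠ 0) (h : IsLeast {t | r ≤ t ∧ t ≤ T ∧ w t < i} m) :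
    yfun T w r i = m := by
  rw [yfun, if_neg hi, h.csInf_eq]

end Characterization

section Reduction

variable {w w' : ℕ → ℕ} {T T' a r s i j : ℕ}

theorem xfun_eq_of_le_of_forall (har : a ≤ r) (h : ∀ t, a < t → t ≤ r → i ≤ w t) :
    xfun w r i = xfun w a i := by
  induction r, har using Nat.le_induction with
  | base => rfl
  | succ r har ih =>
    rw [xfun, Nat.findGreatest_of_not (h (r + 1) (by omega) le_rfl).not_gt]
    exact ih fun t hat htr => h t hat (by omega)

theorem yfun_eq_of_le_of_forall (hrb : r ≤ a) (haT : a ≤ T) (hT : w T = 0)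
    (h : ∀ t, r ≤ t → t < a → i ≤ w t) : yfun T w r i = yfun T w a i := by
  rcases eq_or_ne i 0 with rfl | hi
  · simp only [yfun, if_pos]
  obtain ⟨⟨hay, hyT, hy⟩, hleast⟩ := isLeast_yfun hi haT (by omega : w T < i)
  refine yfun_eq_of_isLeast hi ⟨⟨hrb.trans hay, hyT, hy⟩, fun t ⟨hrt, htT, ht⟩ => ?_⟩
  by_cases hta : t < a
  · exact absurd ht (h t hrt hta).not_gt
  · exact hleast ⟨not_lt.mp hta, htT, ht⟩

theorem xfun_add (h : ∀ t ≤ s, w (a + t) < i ↔ w' t < j) (h0 : w' 0 < j) :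
    xfun w (a + s) i = a + xfun w' s j := by
  obtain ⟨⟨hcs, hc⟩, hgreatest⟩ := isGreatest_xfun (r := s) h0
  refine xfun_eq_of_isGreatest ⟨⟨by omega, (h _ hcs).mpr hc⟩, fun t ⟨hts, ht⟩ => ?_⟩
  by_cases hta : t < a
  · omega
  obtain ⟨t, rfl⟩ := Nat.exists_eq_add_of_le (not_lt.mp hta)
  exact Nat.add_le_add_left (hgreatest ⟨by omega, (h t (by omega)).mp ht⟩) a

theorem yfun_add (hT : a + T' ≤ T) (hs : s ≤ T') (h : ∀ t ≤ T', w (a + t) < i ↔ w' t < j)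
    (hT' : w' T' < j) : yfun T w (a + s) i = a + yfun T' w' s j := by
  have hi : i ≠ 0 := by have := (h T' le_rfl).mpr hT'; omega
  obtain ⟨⟨hsd, hdT, hd⟩, hleast⟩ := isLeast_yfun (by omega) hs hT'
  refine yfun_eq_of_isLeast hi
    ⟨⟨by omega, by omega, (h _ hdT).mpr hd⟩, fun t ⟨hst, htT, ht⟩ => ?_⟩
  by_cases hta : a + T' < t
  · omega
  obtain ⟨t, rfl⟩ := Nat.exists_eq_add_of_le (le_trans (Nat.le_add_right a s) hst)
  exact Nat.add_le_add_left (hleast ⟨by omega, by omega, (h t (by omega)).mp ht⟩) a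

end Reduction

theorem exists_eq_mul_or_mem_Ioo {N : ℕ} (hN : 0 < N) (t : ℕ) :
    ∃ j, t = j * N ∨ t ∈ Set.Ioo (j * N) ((j + 1) * N) := by
  have hdiv := Nat.div_add_mod' t N
  have hlt := Nat.lt_div_mul_add (a := t) hN
  refine ⟨t / N, ?_⟩
  rw [Set.mem_Ioo, Nat.succ_mul]
  omega

section Blocks

variable {N L : ℕ} {w w'' : ℕ → ℕ} (hN : 0 < N) (hnode : ∀ m ≤ L, w'' (m * N) = w m)
  (hblock : ∀ j < L, ∀ t, j * N < t → t < (j + 1) * N → max (w j) (w (j + 1)) ≤ w'' t)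
include hN hnode hblock

theorem xfun_mul (hw0 : w 0 = 0) {m : ℕ} (hm : m ≤ L) (i : ℕ) :
    xfun w'' (m * N) i = N * xfun w m i := by
  rcases Nat.eq_zero_or_pos i with rfl | hi
  · rw [xfun_zero, xfun_zero, mul_zero]
  obtain ⟨⟨hcm, hc⟩, hgreatest⟩ := isGreatest_xfun (r := m) (by omega : w 0 < i)
  rw [mul_comm N]
  refine xfun_eq_of_isGreatest ⟨⟨Nat.mul_le_mul_right N hcm,
    (hnode _ (hcm.trans hm)).symm ▸ hc⟩, fun t ⟨htm, ht⟩ => ?_⟩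
  obtain ⟨j, rfl | ⟨hjt, htj⟩⟩ := exists_eq_mul_or_mem_Ioo hN t
  · have hjm : j ≤ m := Nat.le_of_mul_le_mul_right htm hN
    exact Nat.mul_le_mul_right N (hgreatest ⟨hjm, hnode j (hjm.trans hm) ▸ ht⟩)
  · have hjm : j < m := Nat.lt_of_mul_lt_mul_right (hjt.trans_le htm)
    have hwj := hblock j (by omega) t hjt htj
    have hcj : j + 1 ≤ xfun w m i := hgreatest ⟨hjm, by omega⟩
    exact htj.le.trans (Nat.mul_le_mul_right N hcj)

theorem yfun_mul (hwL : w L = 0) {m : ℕ} (hm : m ≤ L) (i : ℕ) :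
    yfun (L * N) w'' (m * N) i = N * yfun L w m i := by
  rcases eq_or_ne i 0 with rfl | hi
  · simp only [yfun, if_pos, mul_comm]
  obtain ⟨⟨hmd, hdL, hd⟩, hleast⟩ := isLeast_yfun hi hm (by omega : w L < i)
  rw [mul_comm N]
  refine yfun_eq_of_isLeast hi ⟨⟨Nat.mul_le_mul_right N hmd, Nat.mul_le_mul_right N hdL,
    (hnode _ hdL).symm ▸ hd⟩, fun t ⟨hmt, htL, ht⟩ => ?_⟩
  obtain ⟨j, rfl | ⟨hjt, htj⟩⟩ := exists_eq_mul_or_mem_Ioo hN t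
  · have hjL : j ≤ L := Nat.le_of_mul_le_mul_right htL hN
    exact Nat.mul_le_mul_right N
      (hleast ⟨Nat.le_of_mul_le_mul_right hmt hN, hjL, hnode j hjL ▸ ht⟩)
  · have hjL : j < L := Nat.lt_of_mul_lt_mul_right (hjt.trans_le htL)
    have hmj : m < j + 1 := Nat.lt_of_mul_lt_mul_right (hmt.trans_lt htj)
    have hwj := hblock j hjL t hjt htj
    have hdj : yfun L w m i ≤ j := hleast ⟨by omega, hjL.le, by omega⟩
    exact (Nat.mul_le_mul_right N hdj).trans hjt.le

end Blocks

section WOslash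

variable {M M' : ℕ} {w w' w'' : ℕ → ℕ}

theorem wOslash_mul (hw0 : w 0 = 0) (hw''0 : w'' 0 = 0)
    (hw''top : ∀ n ≤ M, w'' ((n + 1) * (M' + 1)) = w (n + 1)) :
    ∀ m ≤ M + 1, w'' (m * (M' + 1)) = w m
  | 0, _ => by rw [zero_mul, hw''0, hw0]
  | m + 1, hm => hw''top m (by omega)

theorem max_le_wOslash
    (hw''mid : ∀ n ≤ M, ∀ r : ℕ, n * (M' + 1) < r → r < (n + 1) * (M' + 1) →
      w'' r = max (w n) (w (n + 1)) + w' (r - n * (M' + 1))) :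
    ∀ n < M + 1, ∀ t, n * (M' + 1) < t → t < (n + 1) * (M' + 1) →
      max (w n) (w (n + 1)) ≤ w'' t := fun n hn t ht1 ht2 =>
  (hw''mid n (by omega) t ht1 ht2).symm ▸ Nat.le_add_right _ _

theorem wOslash_add_lt_iff (hw0 : w 0 = 0) (hw'0 : w' 0 = 0) (hw'M : w' (M' + 1) = 0)
    (hw''0 : w'' 0 = 0)
    (hw''mid : ∀ n ≤ M, ∀ r : ℕ, n * (M' + 1) < r → r < (n + 1) * (M' + 1) →
      w'' r = max (w n) (w (n + 1)) + w' (r - n * (M' + 1)))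
    (hw''top : ∀ n ≤ M, w'' ((n + 1) * (M' + 1)) = w (n + 1))
    {n i : ℕ} (hn : n ≤ M) (hi : max (w n) (w (n + 1)) < i) :
    ∀ t ≤ M' + 1, w'' (n * (M' + 1) + t) < i ↔ w' t < i - max (w n) (w (n + 1)) := by
  intro t ht
  have htop : n * (M' + 1) + (M' + 1) = (n + 1) * (M' + 1) := (Nat.succ_mul n (M' + 1)).symm
  rcases Nat.eq_zero_or_pos t with rfl | ht0
  · rw [add_zero, wOslash_mul hw0 hw''0 hw''top n (by omega), hw'0]
    omega
  rcases ht.lt_or_eq with ht | rfl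
  · rw [hw''mid n hn _ (by omega) (by omega), Nat.add_sub_cancel_left]
    omega
  · rw [htop, hw''top n hn, hw'M]
    omega

end WOslash

/-- **Corollary `x''`.** With `W''` the weight sequence of
`T_{W,κ} ⊘ T_{W',κ}` and `K_n = max{w_n, w_{n+1}}`, for all `n ∈ {0,…,M}`,
`r` with `n(M'+1) < r ≤ (n+1)(M'+1)`, and `i ∈ ℕ₀`, the functions `x''`, `y''` for
`W''` are given in terms of `x, y` (for `W`) and `x', y'` (for `W'`) by the stated
case formulas. -/
theorem xfun_yfun_wOslash
    (M : ℕ) (w : ℕ → ℕ) (hw0 : w 0 = 0) (hwM : w (M + 1) = 0)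
    (M' : ℕ) (w' : ℕ → ℕ) (hw'0 : w' 0 = 0) (hw'M : w' (M' + 1) = 0)
    (w'' : ℕ → ℕ) (hw''0 : w'' 0 = 0)
    (hw''mid : ∀ n ≤ M, ∀ r : ℕ, n * (M' + 1) < r → r < (n + 1) * (M' + 1) →
      w'' r = max (w n) (w (n + 1)) + w' (r - n * (M' + 1)))
    (hw''top : ∀ n ≤ M, w'' ((n + 1) * (M' + 1)) = w (n + 1))
    (n : ℕ) (hn : n ≤ M) (r : ℕ) (hr1 : n * (M' + 1) < r)
    (hr2 : r ≤ (n + 1) * (M' + 1)) (i : ℕ) :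
    -- formulas for x''
    ((r = (n + 1) * (M' + 1) →
        xfun w'' r i = (M' + 1) * xfun w (n + 1) i) ∧
      (r ≠ (n + 1) * (M' + 1) → i ≤ max (w n) (w (n + 1)) →
        xfun w'' r i = (M' + 1) * xfun w n i) ∧
      (r ≠ (n + 1) * (M' + 1) → max (w n) (w (n + 1)) < i →
        xfun w'' r i
          = n * (M' + 1) + xfun w' (r - n * (M' + 1)) (i - max (w n) (w (n + 1))))) ∧
    -- formulas for y''
    (((r = (n + 1) * (M' + 1) ∨ i ≤ max (w n) (w (n + 1))) →
        yfun ((M + 1) * (M' + 1)) w'' r i = (M' + 1) * yfun (M + 1) w (n + 1) i) ∧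
      (r ≠ (n + 1) * (M' + 1) → max (w n) (w (n + 1)) < i →
        yfun ((M + 1) * (M' + 1)) w'' r i
          = n * (M' + 1)
            + yfun (M' + 1) w' (r - n * (M' + 1)) (i - max (w n) (w (n + 1))))) := by
  have hnode := wOslash_mul hw0 hw''0 hw''top
  have hblock := max_le_wOslash hw''mid
  have hagree (hi) := wOslash_add_lt_iff hw0 hw'0 hw'M hw''0 hw''mid hw''top hn (i := i) hi
  have hxmul (m) (hm : m ≤ M + 1) := xfun_mul M'.succ_pos hnode hblock hw0 hm
  have hymul (m) (hm : m ≤ M + 1) := yfun_mul M'.succ_pos hnode hblock hwM hm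
  have htop : (n + 1) * (M' + 1) = n * (M' + 1) + (M' + 1) := Nat.succ_mul n (M' + 1)
  obtain ⟨s, rfl⟩ := Nat.exists_eq_add_of_le hr1.le
  rw [Nat.add_sub_cancel_left]
  refine ⟨⟨fun hr => ?_, fun hr hi => ?_, fun _ hi => ?_⟩, fun hr => ?_, fun _ hi => ?_⟩
  · rw [hr]
    exact hxmul _ (by omega) i
  · rw [xfun_eq_of_le_of_forall (Nat.le_add_right _ s)
      fun t h1 h2 => hi.trans (hblock n (by omega) t h1 (by omega))]
    exact hxmul _ (by omega) i
  · exact xfun_add (fun t ht => hagree hi t (by omega)) (by omega)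
  · rw [yfun_eq_of_le_of_forall hr2 (Nat.mul_le_mul_right _ (by omega)) (hnode _ le_rfl ▸ hwM)
      fun t h1 h2 => ?_]
    · exact hymul _ (by omega) i
    · rcases hr with hr | hi
      · omega
      · exact hi.trans (hblock n (by omega) t (by omega) h2)
  · exact yfun_add (by rw [← htop]; exact Nat.mul_le_mul_right _ (by omega)) (by omega)
      (hagree hi) (by omega)
end

section
/- For every cardinality κ and every n ∈ ℕ, the complete κ-branching rooted tree of height n, equipped with its shortest-path metric, embeds isometrically as a subgraph into the κ-branching bundle graph T_{W,κ} with W = (0, 1, 2, …, n−1, n, n−1, …, 2, 1, 0); namely, the map sending a sequence A ∈ κ^{≤ n} (a vertex of the tree at level |A|) to the vertex (|A|, A) of T_{W,κ} is an isometric embedding. -/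
/-- The complete κ-branching rooted tree of height `n`: vertices are the sequences in
`κ` of length at most `n`, and two vertices are adjacent iff one is an initial segment
of the other and their lengths differ by `1`. -/
def treeGraph (n : ℕ) (κ : Type*) : SimpleGraph {l : List κ // l.length ≤ n} :=
  SimpleGraph.fromRel fun a b => a.val <+: b.val ∧ a.val.length + 1 = b.val.length

/-- The map sending a vertex `A` of the tree (at level `|A|`) to the vertex
`(|A|, A)` of `T_{W,κ}` with `W = (0, 1, …, n−1, n, n−1, …, 1, 0)`,
i.e. `M = 2n − 1` and `w_r = min{r, 2n − r}`. -/
def treeEmb (n : ℕ) (hn : 1 ≤ n) (κ : Type*) (A : {l : List κ // l.length ≤ n}) :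
    BundleVertex (2 * n - 1) (fun r => min r (2 * n - r)) κ :=
  ⟨(A.val.length, A.val), by
    have h := A.property
    refine ⟨by omega, ?_⟩
    show A.val.length = min A.val.length (2 * n - A.val.length)
    omega⟩

namespace SimpleGraph

variable {V W : Type*} {G : SimpleGraph V} {H : SimpleGraph W}

theorem Hom.edist_le (f : G →g H) (u v : V) : H.edist (f u) (f v) ≤ G.edist u v :=
  le_iInf fun p => (SimpleGraph.edist_le (p.map f)).trans_eq (by rw [Walk.length_map])

theorem Hom.dist_eq_of_leftInverse (f : G →g H) (g : H →g G)
    (hgf : Function.LeftInverse g f) (u v : V) : H.dist (f u) (f v) = G.dist u v := by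
  have hedist : H.edist (f u) (f v) = G.edist u v :=
    le_antisymm (f.edist_le u v) (by simpa only [hgf u, hgf v] using g.edist_le (f u) (f v))
  rw [dist, dist, hedist]

end SimpleGraph

section

variable {n : ℕ} {κ : Type*}

theorem treeGraph_adj_iff {A B : {l : List κ // l.length ≤ n}} :
    (treeGraph n κ).Adj A B ↔
      (A.val.length + 1 = B.val.length ∨ B.val.length + 1 = A.val.length) ∧
        (A.val <+: B.val ∨ B.val <+: A.val) := by
  simp only [treeGraph, SimpleGraph.fromRel_adj, ne_eq]
  constructor
  · rintro ⟨-, ⟨hp, hl⟩ | ⟨hp, hl⟩⟩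
    · exact ⟨.inl hl, .inl hp⟩
    · exact ⟨.inr hl, .inr hp⟩
  · rintro ⟨hl, hp | hp⟩
    all_goals
      have := hp.length_le
      refine ⟨fun h => by subst h; omega, ?_⟩
    · exact .inl ⟨hp, by omega⟩
    · exact .inr ⟨hp, by omega⟩

theorem treeGraph_adj_iff_bundleGraph_adj (hn : 1 ≤ n) (A B : {l : List κ // l.length ≤ n}) :
    (treeGraph n κ).Adj A B ↔
      (bundleGraph (2 * n - 1) (fun r => min r (2 * n - r)) κ).Adj
        (treeEmb n hn κ A) (treeEmb n hn κ B) :=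
  treeGraph_adj_iff

def treeEmbHom (hn : 1 ≤ n) :
    treeGraph n κ →g bundleGraph (2 * n - 1) (fun r => min r (2 * n - r)) κ where
  toFun := treeEmb n hn κ
  map_rel' h := (treeGraph_adj_iff_bundleGraph_adj hn _ _).mp h

def bundleGraphProj {M : ℕ} {w : ℕ → ℕ} (hw : ∀ r ≤ M + 1, w r ≤ n)
    (hstep : ∀ r ≤ M, w r + 1 = w (r + 1) ∨ w (r + 1) + 1 = w r) :
    bundleGraph M w κ →g treeGraph n κ where
  toFun v := ⟨v.val.2, v.property.2 ▸ hw _ v.property.1⟩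
  map_rel' := by
    rintro ⟨⟨r, A⟩, hr, hA⟩ ⟨⟨s, B⟩, hs, hB⟩ ⟨hrs, hAB⟩
    refine treeGraph_adj_iff.mpr ⟨?_, hAB⟩
    dsimp only at hr hA hs hB hrs ⊢
    rcases hrs with rfl | rfl
    · have := hstep r (by omega); omega
    · have := hstep s (by omega); omega

end

theorem min_two_mul_sub_le (n r : ℕ) : min r (2 * n - r) ≤ n := by omega

theorem min_two_mul_sub_step {n : ℕ} (hn : 1 ≤ n) {r : ℕ} (hr : r ≤ 2 * n - 1) :
    min r (2 * n - r) + 1 = min (r + 1) (2 * n - (r + 1)) ∨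
      min (r + 1) (2 * n - (r + 1)) + 1 = min r (2 * n - r) := by
  omega

/-- The complete κ-branching rooted tree of height `n` embeds
isometrically, as a subgraph, into the bundle graph `T_{W,κ}` with
`W = (0,1,2,…,n−1,n,n−1,…,2,1,0)`, via the map `A ↦ (|A|, A)`. -/
theorem treeGraph_isometric_into_bundleGraph
    (n : ℕ) (hn : 1 ≤ n) (κ : Type*) :
    (∀ A B : {l : List κ // l.length ≤ n},
      (treeGraph n κ).Adj A B ↔
        (bundleGraph (2 * n - 1) (fun r => min r (2 * n - r)) κ).Adj
          (treeEmb n hn κ A) (treeEmb n hn κ B)) ∧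
    (∀ A B : {l : List κ // l.length ≤ n},
      (treeGraph n κ).dist A B =
        (bundleGraph (2 * n - 1) (fun r => min r (2 * n - r)) κ).dist
          (treeEmb n hn κ A) (treeEmb n hn κ B)) := by
  let proj : _ →g treeGraph n κ :=
    bundleGraphProj (fun r _ => min_two_mul_sub_le n r) (fun _ hr => min_two_mul_sub_step hn hr)
  exact ⟨treeGraph_adj_iff_bundleGraph_adj hn,
    fun A B => ((treeEmbHom hn).dist_eq_of_leftInverse proj (fun _ => rfl) A B).symm⟩
end

section
/- Let κ be a finite cardinality and let G = T_{W,κ} be a nontrivial bundle graph (i.e., max W ≥ 1, so G has a vertex of nonzero depth). Then for every uniformly convex Banach space X, the family {G^{⊘^k}}_{k=1}^∞ is not equi-bi-Lipschitzly embeddable into X; that is, sup_{k ∈ ℕ} c_X(G^{⊘^k}) = ∞, where c_X(M) denotes the infimum of distortions of bi-Lipschitz embeddings of the metric space M into X. -/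
def wOslash (M' : ℕ) (w w' : ℕ → ℕ) : ℕ → ℕ := fun r =>
  if r = 0 then 0
  else if (M' + 1) ∣ r then w (r / (M' + 1))
  else max (w (r / (M' + 1))) (w (r / (M' + 1) + 1)) + w' (r - (r / (M' + 1)) * (M' + 1))

/-- The weight sequence of `G^{⊘^{k+1}}` for `G = T_{W,κ}`:
`G^{⊘^1} = G`, `G^{⊘^{k+1}} = G^{⊘^k} ⊘ G`; `G^{⊘^{k+1}} = T_{wIter M w k, κ}`,
of height `(M+1)^{k+1}`. -/
def wIter (M : ℕ) (w : ℕ → ℕ) : ℕ → (ℕ → ℕ)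
  | 0 => w
  | k + 1 => wOslash M (wIter M w k) w

section Weights

variable {M : ℕ} {w : ℕ → ℕ}

lemma wIter_apply_zero (hw0 : w 0 = 0) : ∀ k, wIter M w k 0 = 0
  | 0 => hw0
  | k + 1 => by simp [wIter, wOslash]

lemma wIter_succ_apply_mul (hw0 : w 0 = 0) (k m : ℕ) :
    wIter M w (k + 1) ((M + 1) * m) = wIter M w k m := by
  rcases Nat.eq_zero_or_pos m with rfl | hm
  · rw [Nat.mul_zero, wIter_apply_zero hw0, wIter_apply_zero hw0]
  · simp only [wIter, wOslash, dvd_mul_right, if_true, Nat.mul_div_cancel_left m M.succ_pos]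
    rw [if_neg (by positivity)]

lemma wIter_apply_pow_mul (hw0 : w 0 = 0) {i k : ℕ} (h : i ≤ k) (m : ℕ) :
    wIter M w k ((M + 1) ^ i * m) = wIter M w (k - i) m := by
  obtain ⟨k, rfl⟩ := Nat.exists_eq_add_of_le h
  rw [Nat.add_sub_cancel_left]
  induction i with
  | zero => simp
  | succ i ih =>
    rw [pow_succ', mul_assoc, Nat.add_right_comm, wIter_succ_apply_mul hw0, ih (by omega)]

lemma wIter_succ_apply_of_not_dvd (k : ℕ) {t : ℕ} (h : ¬ (M + 1) ∣ t) :
    wIter M w (k + 1) t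
      = max (wIter M w k (t / (M + 1))) (wIter M w k (t / (M + 1) + 1)) + w (t % (M + 1)) := by
  have ht : t ≠ 0 := by rintro rfl; exact h (dvd_zero _)
  simp only [wIter, wOslash, if_neg ht, if_neg h, ← Nat.mod_eq_sub_div_mul]

lemma max_wIter_le_of_lt_of_lt (hw0 : w 0 = 0) {k i q t : ℕ} (hik : i ≤ k)
    (h₁ : (M + 1) ^ i * q < t) (h₂ : t < (M + 1) ^ i * (q + 1)) :
    max (wIter M w k ((M + 1) ^ i * q)) (wIter M w k ((M + 1) ^ i * (q + 1))) ≤ wIter M w k t := by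
  induction k generalizing i q t with
  | zero =>
    obtain rfl : i = 0 := by omega
    simp only [pow_zero, one_mul] at h₁ h₂; omega
  | succ k IH =>
    obtain _ | i := i
    · simp only [pow_zero, one_mul] at h₁ h₂; omega
    simp only [pow_succ', mul_assoc, wIter_succ_apply_mul hw0] at h₁ h₂ ⊢
    by_cases hdvd : (M + 1) ∣ t
    · obtain ⟨s, rfl⟩ := hdvd
      rw [wIter_succ_apply_mul hw0]
      exact IH (by omega) (Nat.lt_of_mul_lt_mul_left h₁) (Nat.lt_of_mul_lt_mul_left h₂)
    · rw [wIter_succ_apply_of_not_dvd k hdvd]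
      set s := t / (M + 1)
      have hs₁ : (M + 1) ^ i * q ≤ s := (Nat.le_div_iff_mul_le M.succ_pos).2 (by linarith)
      have hs₂ : s < (M + 1) ^ i * (q + 1) := (Nat.div_lt_iff_lt_mul M.succ_pos).2 (by linarith)
      refine le_trans ?_ (Nat.le_add_right _ _)
      rcases hs₁.lt_or_eq with hs₁ | hs₁
      · exact le_max_of_le_left (IH (by omega) hs₁ hs₂)
      rcases (Nat.succ_le_of_lt hs₂).lt_or_eq with hs₂ | hs₂
      · exact le_max_of_le_right (IH (by omega) (by omega) hs₂)
      · rw [hs₁, ← hs₂]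

lemma wIter_pow_mul_le (hw0 : w 0 = 0) {k i e t : ℕ} (hik : i ≤ k)
    (h₁ : (M + 1) ^ i * e < t + (M + 1) ^ i) (h₂ : t < (M + 1) ^ i * e + (M + 1) ^ i) :
    wIter M w k ((M + 1) ^ i * e) ≤ wIter M w k t := by
  rcases lt_trichotomy t ((M + 1) ^ i * e) with hlt | rfl | hgt
  · obtain _ | e := e
    · simp at hlt
    rw [mul_add_one] at h₁
    exact (le_max_right _ _).trans (max_wIter_le_of_lt_of_lt hw0 hik (by omega) hlt)
  · rfl
  · rw [← mul_add_one] at h₂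
    exact (le_max_left _ _).trans (max_wIter_le_of_lt_of_lt hw0 hik hgt h₂)

lemma max_wIter_lt_wIter_mul_add (hw0 : w 0 = 0) (hwM : w (M + 1) = 0) {r : ℕ} (hr : 1 ≤ w r)
    (hrM : r ≤ M) {m q : ℕ} (hq : (M + 1) * (q + 1) ≤ (M + 1) ^ (m + 1)) :
    max (wIter M w m ((M + 1) * q)) (wIter M w m ((M + 1) * (q + 1)))
      < wIter M w m ((M + 1) * q + r) := by
  have hr0 : r ≠ 0 := by rintro rfl; omega
  cases m with
  | zero =>
    obtain rfl : q = 0 := by rw [zero_add, pow_one] at hq; nlinarith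
    simp only [wIter, mul_zero, zero_add, mul_one, hw0, hwM, max_self]
    omega
  | succ m =>
    have hdvd : ¬ (M + 1) ∣ (M + 1) * q + r := by
      rw [Nat.dvd_add_right (dvd_mul_right _ _)]
      exact Nat.not_dvd_of_pos_of_lt (by omega) (by omega)
    have hdiv : ((M + 1) * q + r) / (M + 1) = q := by
      rw [Nat.mul_add_div M.succ_pos, Nat.div_eq_of_lt (by omega), Nat.add_zero]
    have hmod : ((M + 1) * q + r) % (M + 1) = r := by
      rw [Nat.mul_add_mod, Nat.mod_eq_of_lt (by omega)]
    rw [wIter_succ_apply_mul hw0, wIter_succ_apply_mul hw0, wIter_succ_apply_of_not_dvd m hdvd,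
      hdiv, hmod]
    omega

lemma max_wIter_lt_wIter_pow_mul (hw0 : w 0 = 0) (hwM : w (M + 1) = 0) {r : ℕ} (hr : 1 ≤ w r)
    (hrM : r ≤ M) {n j q : ℕ} (hj : j ≤ n) (hq : (M + 1) ^ (j + 1) * (q + 1) ≤ (M + 1) ^ (n + 1)) :
    max (wIter M w n ((M + 1) ^ (j + 1) * q)) (wIter M w n ((M + 1) ^ (j + 1) * (q + 1)))
      < wIter M w n ((M + 1) ^ j * ((M + 1) * q + r)) := by
  have hn : (M + 1) ^ (n + 1) = (M + 1) ^ j * (M + 1) ^ (n - j + 1) := by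
    rw [← pow_add]; congr 1; omega
  rw [hn, pow_succ, mul_assoc] at hq
  simp only [pow_succ, mul_assoc, wIter_apply_pow_mul hw0 hj]
  exact max_wIter_lt_wIter_mul_add hw0 hwM hr hrM (Nat.le_of_mul_le_mul_left hq (by positivity))

lemma exists_le_one_le_of_one_le_sup (hwM : w (M + 1) = 0)
    (hW : 1 ≤ (Finset.range (M + 2)).sup w) : ∃ r ≤ M, 1 ≤ w r := by
  obtain ⟨r, hr, hwr⟩ := (Finset.le_sup_iff Nat.one_pos).1 hW
  refine ⟨r, ?_, hwr⟩
  have := Finset.mem_range.1 hr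
  by_contra h
  obtain rfl : r = M + 1 := by omega
  omega

end Weights

lemma List.map_range_prefix {α : Type*} (σ : ℕ → α) {m n : ℕ} (h : m ≤ n) :
    (List.range m).map σ <+: (List.range n).map σ := by
  simpa [min_eq_left h] using ((List.range n).take_prefix m).map σ

namespace BundleVertex

variable {N : ℕ} {V : ℕ → ℕ} {κ : Type*}

/-- Capping the level at `N + 1` keeps `ray σ` total, so no bound on `r` has to be carried
around. -/
def ray (σ : ℕ → κ) (r : ℕ) : BundleVertex N V κ :=
  ⟨(min r (N + 1), (List.range (V (min r (N + 1)))).map σ), min_le_right _ _, by simp⟩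

lemma ray_fst (σ : ℕ → κ) {r : ℕ} (hr : r ≤ N + 1) : (ray σ r : BundleVertex N V κ).1.1 = r :=
  min_eq_left hr

lemma ray_snd_prefix_or (σ : ℕ → κ) (r s : ℕ) :
    (ray σ r : BundleVertex N V κ).1.2 <+: (ray σ s : BundleVertex N V κ).1.2 ∨
      (ray σ s : BundleVertex N V κ).1.2 <+: (ray σ r : BundleVertex N V κ).1.2 :=
  (le_total _ _).imp (List.map_range_prefix σ) (List.map_range_prefix σ)

lemma getElem?_ray_snd (σ : ℕ → κ) {r c : ℕ} (hc : c < V (min r (N + 1))) :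
    (ray σ r : BundleVertex N V κ).1.2[c]? = some (σ c) := by
  simp [ray, hc]

lemma ray_of_le (σ : ℕ → κ) {r : ℕ} (hr : N + 1 ≤ r) :
    (ray σ r : BundleVertex N V κ) = ray σ (N + 1) :=
  Subtype.ext (by simp only [ray, min_eq_right hr, min_self])

lemma ray_update_of_le (σ : ℕ → κ) {c r : ℕ} (z : κ) (h : V (min r (N + 1)) ≤ c) :
    (ray (Function.update σ c z) r : BundleVertex N V κ) = ray σ r := by
  refine Subtype.ext (Prod.ext rfl (List.map_congr_left fun i hi => ?_))
  rw [List.mem_range] at hi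
  exact Function.update_of_ne (by omega) _ _

lemma ray_getD_of_prefix (z : κ) {u : BundleVertex N V κ} {L : List κ} (h : u.1.2 <+: L) :
    ray (fun i => L.getD i z) u.1.1 = u := by
  refine Subtype.ext (Prod.ext (min_eq_left u.2.1) ?_)
  simp only [ray, min_eq_left u.2.1]
  refine List.ext_getElem (by simp [u.2.2]) fun i hi hi' => ?_
  simp only [List.getElem_map, List.getElem_range]
  rw [List.getD_eq_getElem _ _ (hi'.trans_le h.length_le), h.getElem hi']

lemma adj_ray_succ (σ : ℕ → κ) {r : ℕ} (hr : r ≤ N) :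
    (bundleGraph N V κ).Adj (ray σ r) (ray σ (r + 1)) :=
  ⟨Or.inl (by rw [ray_fst σ (by omega), ray_fst σ (by omega)]), ray_snd_prefix_or σ _ _⟩

lemma reachable_ray (σ : ℕ → κ) (r s : ℕ) :
    (bundleGraph N V κ).Reachable (ray σ r) (ray σ s) := by
  have hsucc (t : ℕ) : (bundleGraph N V κ).Reachable (ray σ t) (ray σ (t + 1)) := by
    by_cases ht : t ≤ N
    · exact (adj_ray_succ σ ht).reachable
    · rw [ray_of_le σ (show N + 1 ≤ t by omega), ray_of_le σ (show N + 1 ≤ t + 1 by omega)]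
  wlog hrs : r ≤ s generalizing r s
  · exact (this s r (by omega)).symm
  induction s, hrs using Nat.le_induction with
  | base => rfl
  | succ s _ ih => exact ih.trans (hsucc s)

lemma level_le_level_add_length {u v : BundleVertex N V κ} (p : (bundleGraph N V κ).Walk u v) :
    u.1.1 ≤ v.1.1 + p.length := by
  induction p with
  | nil => simp
  | cons h p ih => rcases h.1 with h | h <;> simp only [SimpleGraph.Walk.length_cons] <;> omega

lemma level_le_level_add_dist {u v : BundleVertex N V κ}
    (h : (bundleGraph N V κ).Reachable u v) : u.1.1 ≤ v.1.1 + (bundleGraph N V κ).dist u v := by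
  obtain ⟨p, hp⟩ := h.exists_walk_length_eq_dist
  exact hp ▸ level_le_level_add_length p

lemma getElem?_eq_of_walk {c : ℕ} {u v : BundleVertex N V κ} (p : (bundleGraph N V κ).Walk u v)
    (hp : ∀ x ∈ p.support, c < x.1.2.length) : u.1.2[c]? = v.1.2[c]? := by
  induction p with
  | nil => rfl
  | @cons u x v h p ih =>
    simp only [SimpleGraph.Walk.support_cons, List.mem_cons, forall_eq_or_imp] at hp
    refine Eq.trans ?_ (ih (fun y hy => hp.2 y hy))
    have hx := hp.2 x p.start_mem_support
    rcases h.2 with h | h <;>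
      rw [List.getElem?_eq_getElem hp.1, List.getElem?_eq_getElem hx, h.getElem]

lemma two_mul_le_length_of_getElem?_ne {c d : ℕ} {a b : BundleVertex N V κ}
    (hab : a.1.1 = b.1.1) (hne : a.1.2[c]? ≠ b.1.2[c]?)
    (hfar : ∀ x : BundleVertex N V κ, x.1.2.length ≤ c → d + x.1.1 ≤ a.1.1 ∨ a.1.1 + d ≤ x.1.1)
    (p : (bundleGraph N V κ).Walk a b) : 2 * d ≤ p.length := by
  classical
  obtain ⟨x, hx, hxc⟩ : ∃ x ∈ p.support, x.1.2.length ≤ c := by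
    by_contra! h
    exact hne (getElem?_eq_of_walk p h)
  have h₁ := level_le_level_add_length (p.takeUntil x hx)
  have h₁' := level_le_level_add_length (p.takeUntil x hx).reverse
  have h₂ := level_le_level_add_length (p.dropUntil x hx)
  have h₂' := level_le_level_add_length (p.dropUntil x hx).reverse
  have hlen := congrArg SimpleGraph.Walk.length (p.take_spec hx)
  rw [SimpleGraph.Walk.length_append] at hlen
  rw [SimpleGraph.Walk.length_reverse] at h₁' h₂'
  rcases hfar x hxc with h | h <;> omega

/-- `u` and `v` are the bottom and top vertices of one of the copies of a bundle graph of
height `P` out of which `bundleGraph N V κ` is assembled. -/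
def IsBlock (P q : ℕ) (u v : BundleVertex N V κ) : Prop :=
  u.1.1 = P * q ∧ v.1.1 = P * (q + 1) ∧ (u.1.2 <+: v.1.2 ∨ v.1.2 <+: u.1.2)

lemma isBlock_ray (σ : ℕ → κ) {P m : ℕ} (h : P * (m + 1) ≤ N + 1) :
    IsBlock P m (ray σ (P * m) : BundleVertex N V κ) (ray σ (P * (m + 1))) :=
  ⟨ray_fst σ ((Nat.mul_le_mul_left P m.le_succ).trans h), ray_fst σ h, ray_snd_prefix_or σ _ _⟩

lemma norm_sub_ray_le {X : Type*} [SeminormedAddCommGroup X] {ψ : BundleVertex N V κ → X}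
    {P : ℕ} {B : ℝ} (hB : ∀ q u v, IsBlock P q u v → ‖ψ u - ψ v‖ ≤ B) (σ : ℕ → κ) {m d : ℕ}
    (h : P * (m + d) ≤ N + 1) : ‖ψ (ray σ (P * m)) - ψ (ray σ (P * (m + d)))‖ ≤ d * B :=
  calc ‖ψ (ray σ (P * m)) - ψ (ray σ (P * (m + d)))‖
      ≤ ∑ i ∈ Finset.Ico m (m + d), ‖ψ (ray σ (P * i)) - ψ (ray σ (P * (i + 1)))‖ := by
        simpa only [dist_eq_norm] using
          dist_le_Ico_sum_dist (fun i => ψ (ray σ (P * i))) (Nat.le_add_right m d)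
    _ ≤ ∑ _i ∈ Finset.Ico m (m + d), B := Finset.sum_le_sum fun i hi =>
        hB i _ _ (isBlock_ray σ ((Nat.mul_le_mul_left P (by have := Finset.mem_Ico.1 hi; omega)).trans h))
    _ = d * B := by simp

lemma exists_rays_split [Nontrivial κ] {u v : BundleVertex N V κ}
    (h : u.1.2 <+: v.1.2 ∨ v.1.2 <+: u.1.2) :
    ∃ σ σ' : ℕ → κ, ray σ u.1.1 = u ∧ ray σ v.1.1 = v ∧ ray σ' u.1.1 = u ∧ ray σ' v.1.1 = v ∧
      σ (max u.1.2.length v.1.2.length) ≠ σ' (max u.1.2.length v.1.2.length) := by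
  obtain ⟨z, z', hzz'⟩ := exists_pair_ne κ
  obtain ⟨L, huL, hvL, hL⟩ : ∃ L : List κ, u.1.2 <+: L ∧ v.1.2 <+: L ∧
      L.length = max u.1.2.length v.1.2.length := by
    rcases h with h | h
    · exact ⟨v.1.2, h, List.prefix_refl _, (max_eq_right h.length_le).symm⟩
    · exact ⟨u.1.2, List.prefix_refl _, h, (max_eq_left h.length_le).symm⟩
  set σ : ℕ → κ := fun i => L.getD i z
  have hσ' {x : BundleVertex N V κ} (hx : x.1.2 <+: L) :
      ray (Function.update σ L.length z') x.1.1 = x := by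
    rw [ray_update_of_le σ z' (by rw [min_eq_left x.2.1, ← x.2.2]; exact hx.length_le)]
    exact ray_getD_of_prefix z hx
  refine ⟨σ, Function.update σ L.length z', ray_getD_of_prefix z huL, ray_getD_of_prefix z hvL,
    hσ' huL, hσ' hvL, ?_⟩
  rw [← hL, Function.update_self]
  simpa [σ] using hzz'

end BundleVertex

lemma norm_add_le_of_le_norm_inv_smul_sub {X : Type*} [SeminormedAddCommGroup X] [NormedSpace ℝ X]
    {ε δ : ℝ}
    (hUC : ∀ ⦃x : X⦄, ‖x‖ ≤ 1 → ∀ ⦃y⦄, ‖y‖ ≤ 1 → ε ≤ ‖x - y‖ → ‖x + y‖ ≤ 2 - δ)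
    {u v : X} {α β : ℝ} (hα : 0 < α) (hβ : 0 < β) (hu : ‖u‖ ≤ α) (hv : ‖v‖ ≤ β)
    (huv : ε ≤ ‖α⁻¹ • u - β⁻¹ • v‖) : ‖u + v‖ ≤ α + β - min α β * δ := by
  wlog hαβ : α ≤ β generalizing u v α β
  · have := this hβ hα hv hu (by rwa [norm_sub_rev]) (by linarith)
    rwa [add_comm v, add_comm β, min_comm] at this
  have hu' : ‖α⁻¹ • u‖ ≤ 1 := by
    rw [norm_smul_of_nonneg (inv_nonneg.2 hα.le)]; exact inv_mul_le_one_of_le₀ hu hα.le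
  have hv' : ‖β⁻¹ • v‖ ≤ 1 := by
    rw [norm_smul_of_nonneg (inv_nonneg.2 hβ.le)]; exact inv_mul_le_one_of_le₀ hv hβ.le
  calc ‖u + v‖ = ‖α • (α⁻¹ • u + β⁻¹ • v) + (β - α) • (β⁻¹ • v)‖ := by
        congr 1; match_scalars <;> field_simp; ring
    _ ≤ α * (2 - δ) + (β - α) * 1 := by
        refine (norm_add_le _ _).trans (add_le_add ?_ ?_)
        · rw [norm_smul_of_nonneg hα.le]; exact mul_le_mul_of_nonneg_left (hUC hu' hv' huv) hα.le
        · rw [norm_smul_of_nonneg (by linarith)]; exact mul_le_mul_of_nonneg_left hv' (by linarith)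
    _ = α + β - min α β * δ := by rw [min_eq_left hαβ]; ring

def DiamondShortcut (X : Type*) [SeminormedAddCommGroup X] (ε δ : ℝ) : Prop :=
  ∀ ⦃x y a b : X⦄ ⦃α β : ℝ⦄, 0 < α → 0 < β → ‖x - a‖ ≤ α → ‖a - y‖ ≤ β → ‖x - b‖ ≤ α →
    ‖b - y‖ ≤ β → ε * (α + β) ≤ ‖a - b‖ → ‖x - y‖ ≤ α + β - min α β * δ

lemma exists_diamondShortcut (X : Type*) [SeminormedAddCommGroup X] [NormedSpace ℝ X]
    [UniformConvexSpace X] {ε : ℝ} (hε : 0 < ε) : ∃ δ, 0 < δ ∧ δ ≤ 1 ∧ DiamondShortcut X ε δ := by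
  obtain ⟨δ, hδ, hUC⟩ := exists_forall_closed_ball_dist_add_le_two_sub X (by positivity : 0 < 2 * ε)
  refine ⟨min δ 1, by positivity, min_le_right _ _,
    fun x y a b α β hα hβ hxa hay hxb hby hab => ?_⟩
  by_contra! hlt
  have hdefect (z : X) (hxz : ‖x - z‖ ≤ α) (hzy : ‖z - y‖ ≤ β) :
      ‖α⁻¹ • (z - x) - β⁻¹ • (y - z)‖ < 2 * ε := by
    by_contra! h
    have := norm_add_le_of_le_norm_inv_smul_sub (δ := min δ 1)
      (fun _ hu _ hv huv => (hUC hu hv huv).trans (by linarith [min_le_left δ 1])) hα hβ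
      (by rwa [norm_sub_rev]) (by rwa [norm_sub_rev]) h
    rw [sub_add_sub_cancel', norm_sub_rev] at this
    linarith
  have hab' : (α⁻¹ + β⁻¹) * ‖a - b‖ < 4 * ε :=
    calc (α⁻¹ + β⁻¹) * ‖a - b‖
        = ‖(α⁻¹ • (a - x) - β⁻¹ • (y - a)) - (α⁻¹ • (b - x) - β⁻¹ • (y - b))‖ := by
          rw [← norm_smul_of_nonneg (by positivity)]; congr 1; module
      _ ≤ ‖α⁻¹ • (a - x) - β⁻¹ • (y - a)‖ + ‖α⁻¹ • (b - x) - β⁻¹ • (y - b)‖ := norm_sub_le _ _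
      _ < 2 * ε + 2 * ε := add_lt_add (hdefect a hxa hay) (hdefect b hxb hby)
      _ = 4 * ε := by ring
  have hAMHM : 4 ≤ (α⁻¹ + β⁻¹) * (α + β) := by
    have h : (α⁻¹ + β⁻¹) * (α + β) - 4 = (α - β) ^ 2 / (α * β) := by field_simp; ring
    linarith [show 0 ≤ (α - β) ^ 2 / (α * β) by positivity]
  nlinarith [mul_le_mul_of_nonneg_left hab (by positivity : 0 ≤ α⁻¹ + β⁻¹)]

lemma DiamondShortcut.norm_sub_le {X : Type*} [SeminormedAddCommGroup X] {ε δ : ℝ}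
    (hUC : DiamondShortcut X ε δ) (hδ : 0 ≤ δ)
    {s m D : ℝ} (hs : 1 ≤ s) (hsm : s + 1 ≤ m) (hD : 0 < D) {x y a b : X}
    (hxa : ‖x - a‖ ≤ s * D) (hay : ‖a - y‖ ≤ (m - s) * D) (hxb : ‖x - b‖ ≤ s * D)
    (hby : ‖b - y‖ ≤ (m - s) * D) (hab : ε * (m * D) ≤ ‖a - b‖) : ‖x - y‖ ≤ (m - δ) * D := by
  have hmin : D ≤ min (s * D) ((m - s) * D) :=
    le_min (le_mul_of_one_le_left hD.le hs) (le_mul_of_one_le_left hD.le (by linarith))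
  calc ‖x - y‖ ≤ s * D + (m - s) * D - min (s * D) ((m - s) * D) * δ :=
        hUC (by positivity) (mul_pos (by linarith) hD) hxa hay hxb hby
          (by rwa [← add_mul, add_sub_cancel])
    _ ≤ (m - δ) * D := by nlinarith [mul_le_mul_of_nonneg_right hmin hδ]

open BundleVertex

section Embedding

variable {M n N : ℕ} {w : ℕ → ℕ} {κ : Type*}

lemma exists_rays_dist_ge_of_isBlock [Nontrivial κ] (hw0 : w 0 = 0) (hwM : w (M + 1) = 0)
    {r : ℕ} (hr : 1 ≤ w r) (hrM : r ≤ M) (hN : N < (M + 1) ^ (n + 1)) {j q : ℕ} (hj : j ≤ n)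
    {u v : BundleVertex N (wIter M w n) κ} (huv : IsBlock ((M + 1) ^ (j + 1)) q u v) :
    ∃ σ σ' : ℕ → κ, ray σ u.1.1 = u ∧ ray σ v.1.1 = v ∧ ray σ' u.1.1 = u ∧ ray σ' v.1.1 = v ∧
      2 * (M + 1) ^ j ≤ (bundleGraph N (wIter M w n) κ).dist
        (ray σ ((M + 1) ^ j * ((M + 1) * q + r))) (ray σ' ((M + 1) ^ j * ((M + 1) * q + r))) := by
  obtain ⟨hu, hv, hcomp⟩ := huv
  obtain ⟨σ, σ', hσu, hσv, hσ'u, hσ'v, hsplit⟩ := exists_rays_split hcomp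
  refine ⟨σ, σ', hσu, hσv, hσ'u, hσ'v, ?_⟩
  set ρ := (M + 1) ^ j * ((M + 1) * q + r) with hρ_def
  set c := max u.1.2.length v.1.2.length
  have hvN : (M + 1) ^ (j + 1) * (q + 1) ≤ N + 1 := hv ▸ v.2.1
  have hρ : ρ ≤ N + 1 := le_trans (by
    rw [pow_succ, mul_assoc]; exact Nat.mul_le_mul_left _ (by rw [mul_add_one]; omega)) hvN
  have hc : c < wIter M w n ρ := by
    have := max_wIter_lt_wIter_pow_mul hw0 hwM hr hrM hj (hvN.trans hN)
    rwa [← hu, ← hv, ← u.2.2, ← v.2.2] at this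
  have hreach : (bundleGraph N (wIter M w n) κ).Reachable (ray σ ρ) (ray σ' ρ) := by
    have h₁ := reachable_ray (N := N) (V := wIter M w n) σ ρ u.1.1
    have h₂ := reachable_ray (N := N) (V := wIter M w n) σ' u.1.1 ρ
    rw [hσu] at h₁
    rw [hσ'u] at h₂
    exact h₁.trans h₂
  obtain ⟨p, hp⟩ := hreach.exists_walk_length_eq_dist
  rw [← hp]
  refine two_mul_le_length_of_getElem?_ne (c := c) (by rw [ray_fst σ hρ, ray_fst σ' hρ]) ?_ ?_ p
  · rw [getElem?_ray_snd σ (by rwa [min_eq_left hρ]), getElem?_ray_snd σ' (by rwa [min_eq_left hρ])]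
    exact fun h => hsplit (Option.some_injective _ h)
  · intro x hx
    rw [ray_fst σ hρ]
    by_contra! hnear
    have := wIter_pow_mul_le (M := M) hw0 hj (e := (M + 1) * q + r) (t := x.1.1)
      (by omega) (by omega)
    rw [← hρ_def, ← x.2.2] at this
    omega

lemma norm_sub_le_of_isBlock_succ [Nontrivial κ] {X : Type*} [SeminormedAddCommGroup X]
    (hw0 : w 0 = 0) (hwM : w (M + 1) = 0) {r : ℕ} (hr : 1 ≤ w r) (hrM : r ≤ M)
    (hN : N < (M + 1) ^ (n + 1)) {ψ : BundleVertex N (wIter M w n) κ → X} {C₁ ε δ D : ℝ}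
    (hψ : ∀ a b, C₁ * (bundleGraph N (wIter M w n) κ).dist a b ≤ ‖ψ a - ψ b‖) (hC₁ : 0 ≤ C₁)
    (hδ : 0 ≤ δ) (hUC : DiamondShortcut X ε δ) {j : ℕ} (hj : j ≤ n) (hD : 0 < D)
    (hεD : ε * ((M + 1) * D) ≤ C₁ * (M + 1) ^ j)
    (hB : ∀ q u v, IsBlock ((M + 1) ^ j) q u v → ‖ψ u - ψ v‖ ≤ D)
    {q : ℕ} {u v : BundleVertex N (wIter M w n) κ} (huv : IsBlock ((M + 1) ^ (j + 1)) q u v) :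
    ‖ψ u - ψ v‖ ≤ (M + 1 - δ) * D := by
  obtain ⟨σ, σ', hσu, hσv, hσ'u, hσ'v, hdist⟩ :=
    exists_rays_dist_ge_of_isBlock hw0 hwM hr hrM hN hj huv
  have hr0 : r ≠ 0 := by rintro rfl; omega
  have hu : u.1.1 = (M + 1) ^ j * ((M + 1) * q) := by rw [huv.1, pow_succ, mul_assoc]
  have hv : v.1.1 = (M + 1) ^ j * ((M + 1) * q + r + (M + 1 - r)) := by
    rw [huv.2.1, pow_succ, mul_assoc]; congr 1; rw [mul_add_one]; omega
  have harms (τ : ℕ → κ) (hτu : ray τ u.1.1 = u) (hτv : ray τ v.1.1 = v) :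
      ‖ψ u - ψ (ray τ ((M + 1) ^ j * ((M + 1) * q + r)))‖ ≤ r * D ∧
        ‖ψ (ray τ ((M + 1) ^ j * ((M + 1) * q + r))) - ψ v‖ ≤ ((M + 1 - r : ℕ) : ℝ) * D := by
    have hvN : (M + 1) ^ j * ((M + 1) * q + r + (M + 1 - r)) ≤ N + 1 := hv ▸ v.2.1
    rw [hu] at hτu
    rw [hv] at hτv
    rw [← hτu, ← hτv]
    exact ⟨norm_sub_ray_le hB τ (le_trans (Nat.mul_le_mul_left _ (by omega)) hvN),
      norm_sub_ray_le hB τ hvN⟩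
  obtain ⟨hua, hav⟩ := harms σ hσu hσv
  obtain ⟨hub, hbv⟩ := harms σ' hσ'u hσ'v
  rw [Nat.cast_sub (by omega), Nat.cast_add_one] at hav hbv
  refine hUC.norm_sub_le hδ (by exact_mod_cast Nat.one_le_iff_ne_zero.2 hr0)
    (by exact_mod_cast Nat.add_le_add_right hrM 1) hD hua hav hub hbv ?_
  calc ε * ((M + 1) * D) ≤ C₁ * (M + 1) ^ j := hεD
    _ ≤ C₁ * (bundleGraph N (wIter M w n) κ).dist _ _ := by
        refine mul_le_mul_of_nonneg_left ?_ hC₁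
        have : ((2 * (M + 1) ^ j : ℕ) : ℝ) ≤ _ := Nat.cast_le.2 hdist
        push_cast at this
        linarith [show (0 : ℝ) ≤ (M + 1) ^ j by positivity]
    _ ≤ _ := hψ _ _

lemma norm_sub_le_of_isBlock [Nontrivial κ] {X : Type*} [SeminormedAddCommGroup X]
    (hw0 : w 0 = 0) (hwM : w (M + 1) = 0) {r : ℕ} (hr : 1 ≤ w r) (hrM : r ≤ M)
    (hN : N < (M + 1) ^ (n + 1)) {ψ : BundleVertex N (wIter M w n) κ → X} {C₁ C₂ K δ : ℝ}
    (hψ : ∀ a b, C₁ * (bundleGraph N (wIter M w n) κ).dist a b ≤ ‖ψ a - ψ b‖ ∧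
      ‖ψ a - ψ b‖ ≤ C₂ * (bundleGraph N (wIter M w n) κ).dist a b)
    (hC₂ : 0 < C₂) (hK : 0 < K) (hCK : C₂ ≤ K * C₁) (hδ : 0 ≤ δ) (hδ1 : δ ≤ 1)
    (hUC : DiamondShortcut X ((M + 1) * K)⁻¹ δ) {j : ℕ} (hj : j ≤ n + 1) {q : ℕ}
    {u v : BundleVertex N (wIter M w n) κ} (huv : IsBlock ((M + 1) ^ j) q u v) :
    ‖ψ u - ψ v‖ ≤ (M + 1 - δ) ^ j * C₂ := by
  induction j generalizing q u v with
  | zero =>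
    obtain ⟨hu, hv, hcomp⟩ := huv
    have hadj : (bundleGraph N (wIter M w n) κ).Adj u v := ⟨Or.inl (by simp [hu, hv]), hcomp⟩
    simpa [SimpleGraph.dist_eq_one_iff_adj.2 hadj] using (hψ u v).2
  | succ j ih =>
    have hM : (1 : ℝ) ≤ M := by
      have : r ≠ 0 := by rintro rfl; omega
      exact_mod_cast (Nat.one_le_iff_ne_zero.2 this).trans hrM
    rw [pow_succ', mul_assoc]
    refine norm_sub_le_of_isBlock_succ hw0 hwM hr hrM hN (fun a b => (hψ a b).1)
      (by nlinarith) hδ hUC (by omega) (mul_pos (pow_pos (by linarith) j) hC₂) ?_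
      (fun _ _ _ h => ih (by omega) h) huv
    calc ((M + 1) * K)⁻¹ * ((M + 1) * ((M + 1 - δ) ^ j * C₂)) = (M + 1 - δ) ^ j * C₂ / K := by
          field_simp
      _ ≤ (M + 1) ^ j * (K * C₁) / K := by
          gcongr
          · linarith
          · linarith
      _ = C₁ * (M + 1) ^ j := by field_simp

lemma mul_pow_le_pow_mul_of_diamondShortcut [Nontrivial κ] {X : Type*} [SeminormedAddCommGroup X]
    (hw0 : w 0 = 0) (hwM : w (M + 1) = 0) {r : ℕ} (hr : 1 ≤ w r) (hrM : r ≤ M)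
    (hN : N + 1 = (M + 1) ^ (n + 1)) {ψ : BundleVertex N (wIter M w n) κ → X} {C₁ C₂ K δ : ℝ}
    (hψ : ∀ a b, C₁ * (bundleGraph N (wIter M w n) κ).dist a b ≤ ‖ψ a - ψ b‖ ∧
      ‖ψ a - ψ b‖ ≤ C₂ * (bundleGraph N (wIter M w n) κ).dist a b)
    (hC₂ : 0 < C₂) (hK : 0 < K) (hCK : C₂ ≤ K * C₁) (hδ : 0 ≤ δ) (hδ1 : δ ≤ 1)
    (hUC : DiamondShortcut X ((M + 1) * K)⁻¹ δ) :
    C₁ * (M + 1) ^ (n + 1) ≤ (M + 1 - δ) ^ (n + 1) * C₂ := by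
  obtain ⟨z⟩ := (inferInstance : Nonempty κ)
  have hC₁ : 0 ≤ C₁ := by nlinarith
  have hdist : (M + 1) ^ (n + 1) ≤ (bundleGraph N (wIter M w n) κ).dist
      (ray (fun _ => z) (N + 1)) (ray (fun _ => z) 0) := by
    have := level_le_level_add_dist
      (reachable_ray (N := N) (V := wIter M w n) (fun _ => z) (N + 1) 0)
    rw [ray_fst _ le_rfl, ray_fst _ (Nat.zero_le _), zero_add] at this
    rwa [← hN]
  calc C₁ * (M + 1) ^ (n + 1) ≤ C₁ * (bundleGraph N (wIter M w n) κ).dist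
        (ray (fun _ => z) (N + 1)) (ray (fun _ => z) 0) := by
        gcongr; exact_mod_cast hdist
    _ ≤ _ := (hψ _ _).1
    _ = ‖ψ (ray (fun _ => z) 0) - ψ (ray (fun _ => z) (N + 1))‖ := norm_sub_rev _ _
    _ ≤ (M + 1 - δ) ^ (n + 1) * C₂ := by
        refine norm_sub_le_of_isBlock hw0 hwM hr hrM (by omega) hψ hC₂ hK hCK hδ hδ1 hUC le_rfl
          (q := 0) ⟨ray_fst _ (Nat.zero_le _), ?_, ray_snd_prefix_or _ _ _⟩
        rw [ray_fst _ le_rfl, hN, zero_add, mul_one]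

end Embedding

theorem not_equi_biLipschitz_into_uniformConvex_general
    (M : ℕ) (w : ℕ → ℕ) (hw0 : w 0 = 0) (hwM : w (M + 1) = 0)
    (hW : 1 ≤ (Finset.range (M + 2)).sup w)
    (κ : ℕ) (hκ : 2 ≤ κ)
    (X : Type*) [NormedAddCommGroup X] [NormedSpace ℝ X]
    [UniformConvexSpace X] :
    ¬ ∃ K : ℝ, ∀ k : ℕ,
      ∃ ψ : BundleVertex ((M + 1) ^ (k + 1) - 1) (wIter M w k) (Fin κ) → X,
        ∃ C₁ C₂ : ℝ, 0 < C₁ ∧ 0 < C₂ ∧ C₂ / C₁ ≤ K ∧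
          ∀ u v : BundleVertex ((M + 1) ^ (k + 1) - 1) (wIter M w k) (Fin κ),
            C₁ * ((bundleGraph ((M + 1) ^ (k + 1) - 1) (wIter M w k)
                  (Fin κ)).dist u v : ℝ) ≤ ‖ψ u - ψ v‖ ∧
              ‖ψ u - ψ v‖ ≤
                C₂ * ((bundleGraph ((M + 1) ^ (k + 1) - 1) (wIter M w k)
                    (Fin κ)).dist u v : ℝ) := by
  rintro ⟨K, hK⟩
  have : Nontrivial (Fin κ) := Fin.nontrivial_iff_two_le.2 hκ
  obtain ⟨r, hrM, hwr⟩ := exists_le_one_le_of_one_le_sup hwM hW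
  have hK0 : 0 < K := by
    obtain ⟨_, C₁, C₂, hC₁, hC₂, hCK, -⟩ := hK 0
    exact (div_pos hC₂ hC₁).trans_le hCK
  obtain ⟨δ, hδ, hδ1, hUC⟩ := exists_diamondShortcut X (ε := ((M + 1) * K)⁻¹) (by positivity)
  set t : ℝ := (M + 1 - δ) / (M + 1)
  have ht : t < 1 := (div_lt_one (by positivity)).2 (by linarith)
  obtain ⟨n, hn⟩ := exists_pow_lt_of_lt_one (inv_pos.2 hK0) ht
  obtain ⟨ψ, C₁, C₂, hC₁, hC₂, hCK, hψ⟩ := hK n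
  rw [div_le_iff₀ hC₁] at hCK
  have hcomp : C₁ ≤ t ^ (n + 1) * C₂ := by
    have := mul_pow_le_pow_mul_of_diamondShortcut hw0 hwM hwr hrM
      (Nat.sub_add_cancel (Nat.one_le_pow _ _ M.succ_pos)) hψ hC₂ hK0 hCK hδ.le hδ1 hUC
    rw [div_pow, div_mul_eq_mul_div, le_div_iff₀ (by positivity)]
    linarith
  have ht0 : 0 ≤ t := div_nonneg (by linarith) (by positivity)
  have : t ^ (n + 1) * C₂ < C₁ :=
    calc t ^ (n + 1) * C₂ ≤ t ^ n * (K * C₁) :=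
          mul_le_mul (pow_le_pow_of_le_one ht0 ht.le n.le_succ) hCK hC₂.le (by positivity)
      _ < K⁻¹ * (K * C₁) := by gcongr
      _ = C₁ := by field_simp
  linarith

/-- If `G = T_{W,κ}` is a nontrivial finitely branching bundle graph
(`max W ≥ 1`, so `G` has a vertex of nonzero depth, and the branching `κ` is genuine,
i.e. `κ ≥ 2`), then for every uniformly convex Banach space `X` the family
`{G^{⊘^k}}_{k≥1}` is **not** equi-bi-Lipschitzly embeddable into `X`: there is no
uniform bound `K` on the distortions of bi-Lipschitz embeddings of all `G^{⊘^k}`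
into `X`. -/
theorem not_equi_biLipschitz_into_uniformConvex
    (M : ℕ) (w : ℕ → ℕ) (hw0 : w 0 = 0) (hwM : w (M + 1) = 0)
    (hW : 1 ≤ (Finset.range (M + 2)).sup w)
    (κ : ℕ) (hκ : 2 ≤ κ)
    (X : Type*) [NormedAddCommGroup X] [NormedSpace ℝ X] [CompleteSpace X]
    [UniformConvexSpace X] :
    ¬ ∃ K : ℝ, ∀ k : ℕ,
      ∃ ψ : BundleVertex ((M + 1) ^ (k + 1) - 1) (wIter M w k) (Fin κ) → X,
        ∃ C₁ C₂ : ℝ, 0 < C₁ ∧ 0 < C₂ ∧ C₂ / C₁ ≤ K ∧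
          ∀ u v : BundleVertex ((M + 1) ^ (k + 1) - 1) (wIter M w k) (Fin κ),
            C₁ * ((bundleGraph ((M + 1) ^ (k + 1) - 1) (wIter M w k)
                  (Fin κ)).dist u v : ℝ) ≤ ‖ψ u - ψ v‖ ∧
              ‖ψ u - ψ v‖ ≤
                C₂ * ((bundleGraph ((M + 1) ^ (k + 1) - 1) (wIter M w k)
                    (Fin κ)).dist u v : ℝ) :=
  not_equi_biLipschitz_into_uniformConvex_general M w hw0 hwM hW κ hκ X
end
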